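/- For the laziest minimal random walk with parameter p ∈ (0,1), the k-th factorial moment of the position satisfies E[(H_n)_k] = k! · Σ_{i=1}^{k} (-1)^{k-i} C(k-1, i-1) a_n^{(i)} for all integers k ≥ 1 and n ≥ 1, where (x)_k = x(x-1)···(x-k+1) is the falling factorial and a_n^{(i)} = Γ(n+ip)/(Γ(n)Γ(1+ip)). -/

import Mathlib

open MeasureTheory ProbabilityTheory Filter Real

def lazyH {Ω : Type*} (X : ℕ → Ω → ℕ) (n : ℕ) (ω : Ω) : ℕ :=
  ∑ i ∈ Finset.Icc 1 n, X i ω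

/-- `a n k = Γ(n+kp)/(Γ(n)Γ(1+kp))`. -/
noncomputable def aSeqK (p : ℝ) (k n : ℕ) : ℝ :=
  Real.Gamma (n + k * p) / (Real.Gamma n * Real.Gamma (1 + k * p))

/-!
Since `X (n + 1) ∈ {0, 1}`, `(H + X)_(j+1) = (H)_(j+1) + (j + 1) (H)_j X`, and conditioning on `ℱ n`
replaces `X (n + 1)` by `p H_n / n`; with `(H)_j H = (H)_(j+1) + j (H)_j` this gives
`M_(j+1)(n+1) = M_(j+1)(n) + (j + 1) (p / n) (M_(j+1)(n) + j M_j(n))` for `M_k(n) = E[(H_n)_k]`.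
Because `a^(i)_(n+1) = (1 + i p / n) a^(i)_n`, the right-hand side satisfies the same recurrence,
the coefficients obeying `(j + 1 - i) C(j, i - 1) = j C(j - 1, i - 1)`. Both sides agree at `n = 1`
(by the binomial theorem for `(1 - 1)^j`), so they agree for all `n ≥ 1`.
-/

open Finset Nat

namespace Nat

lemma descFactorial_mul_self (h j : ℕ) :
    h.descFactorial j * h = h.descFactorial (j + 1) + j * h.descFactorial j := by
  rcases lt_or_ge h j with hhj | hjh
  · simp [descFactorial_eq_zero_iff_lt.2 hhj]
  · obtain ⟨d, rfl⟩ := exists_add_of_le hjh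
    rw [descFactorial_succ, Nat.add_sub_cancel_left]
    ring

lemma descFactorial_add_of_le_one {x : ℕ} (hx : x ≤ 1) (h j : ℕ) :
    (h + x).descFactorial (j + 1) = h.descFactorial (j + 1) + (j + 1) * h.descFactorial j * x := by
  interval_cases x
  · simp
  · rw [succ_descFactorial_succ]
    linarith [descFactorial_mul_self h j]

lemma sub_mul_choose (m r : ℕ) : (m - r) * m.choose r = m * (m - 1).choose r := by
  cases m with
  | zero => simp
  | succ m => rw [add_tsub_cancel_right, mul_comm, ← choose_mul_succ_eq, mul_comm]

end Nat

lemma aSeqK_succ {p : ℝ} {n : ℕ} (i : ℕ) (hn : n ≠ 0) (hnp : (n : ℝ) + i * p ≠ 0) :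
    aSeqK p i (n + 1) = (n + i * p) / n * aSeqK p i n := by
  have hΓ : Gamma (n + 1 + i * p) = (n + i * p) * Gamma (n + i * p) := by
    rw [add_right_comm, Gamma_add_one hnp]
  simp only [aSeqK, cast_add, cast_one, hΓ, Gamma_add_one (cast_ne_zero.2 hn)]
  field_simp

lemma aSeqK_one {p : ℝ} (hp : 0 ≤ p) (i : ℕ) : aSeqK p i 1 = 1 := by
  rw [aSeqK, cast_one, Gamma_one, one_mul, div_self (Gamma_pos_of_pos (by positivity)).ne']

noncomputable def factorialMomentFormula (p : ℝ) (k n : ℕ) : ℝ :=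
  (k ! : ℝ) * ∑ i ∈ Icc 1 k, (-1 : ℝ) ^ (k - i) * ((k - 1).choose (i - 1) : ℝ) * aSeqK p i n

/-- `u 0` enters only as `0 * u 0 n`, so it does not matter that `factorialMomentFormula p 0 n = 0`
while `E[(H_n)_0] = 1`. -/
def SatisfiesMomentRecurrence (p : ℝ) (u : ℕ → ℕ → ℝ) : Prop :=
  ∀ n, 1 ≤ n → ∀ j : ℕ,
    u (j + 1) (n + 1) = u (j + 1) n + (j + 1) * (p / n) * (u (j + 1) n + j * u j n)

theorem SatisfiesMomentRecurrence.eq {p : ℝ} {u v : ℕ → ℕ → ℝ}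
    (hu : SatisfiesMomentRecurrence p u) (hv : SatisfiesMomentRecurrence p v)
    (h1 : ∀ j, u (j + 1) 1 = v (j + 1) 1) {n : ℕ} (hn : 1 ≤ n) (j : ℕ) :
    u (j + 1) n = v (j + 1) n := by
  induction n, hn using Nat.le_induction generalizing j with
  | base => exact h1 j
  | succ n hn ih =>
    have hj : (j : ℝ) * u j n = j * v j n := by
      cases j with
      | zero => simp
      | succ j => rw [ih j]
    rw [hu n hn j, hv n hn j, ih j, hj]

lemma factorialMomentFormula_one {p : ℝ} (hp : 0 ≤ p) (j : ℕ) :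
    factorialMomentFormula p (j + 1) 1 = ((1 : ℕ).descFactorial (j + 1) : ℝ) := by
  have hsum : ∑ i ∈ Icc 1 (j + 1), (-1 : ℝ) ^ (j + 1 - i) * (j.choose (i - 1) : ℝ)
      = (1 + -1 : ℝ) ^ j := by
    rw [add_pow, ← Ico_add_one_right_eq_Icc, sum_Ico_eq_sum_range, add_tsub_cancel_right]
    refine sum_congr rfl fun r _ => ?_
    rw [one_pow, one_mul, add_tsub_cancel_left, add_comm 1 r, Nat.add_sub_add_right]
  simp only [factorialMomentFormula, aSeqK_one hp, mul_one, add_tsub_cancel_right, hsum]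
  cases j with
  | zero => simp
  | succ j => simp

lemma mul_neg_one_pow_mul_choose {i j : ℕ} (hi : 1 ≤ i) (hij : i ≤ j + 1) :
    (i : ℝ) * ((-1) ^ (j + 1 - i) * (j.choose (i - 1) : ℝ))
      = (j + 1) * ((-1) ^ (j + 1 - i) * (j.choose (i - 1) : ℝ))
        + j * ((-1) ^ (j - i) * ((j - 1).choose (i - 1) : ℝ)) := by
  obtain ⟨d, hd⟩ := exists_add_of_le hij
  have hchoose : ((d : ℕ) : ℝ) * (j.choose (i - 1) : ℝ) = j * ((j - 1).choose (i - 1) : ℝ) := by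
    have h := sub_mul_choose j (i - 1)
    rw [show j - (i - 1) = d by omega] at h
    exact_mod_cast h
  rw [show j + 1 - i = d by omega]
  cases d with
  | zero =>
    have hz : (j : ℝ) * ((j - 1).choose (i - 1) : ℝ) = 0 := by simpa using hchoose.symm
    rw [show (j : ℝ) + 1 = i by exact_mod_cast (hd.trans (add_zero i))]
    linear_combination (-(-1 : ℝ) ^ (j - i)) * hz
  | succ d =>
    rw [show j - i = d by omega, pow_succ]
    push_cast at hchoose
    rw [show (i : ℝ) = j - d by rw [eq_sub_iff_add_eq]; exact_mod_cast (by omega : i + d = j)]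
    linear_combination (-1 : ℝ) ^ d * hchoose

lemma satisfiesMomentRecurrence_factorialMomentFormula {p : ℝ} (hp : 0 ≤ p) :
    SatisfiesMomentRecurrence p (factorialMomentFormula p) := by
  intro n hn j
  set c : ℕ → ℕ → ℝ := fun k i => (-1 : ℝ) ^ (k - i) * ((k - 1).choose (i - 1) : ℝ) with hc
  have hn0 : (n : ℝ) ≠ 0 := by positivity
  have hterm : ∀ i ∈ Icc 1 (j + 1), c (j + 1) i * aSeqK p i (n + 1)
      = c (j + 1) i * aSeqK p i n
        + p / n * ((j + 1) * (c (j + 1) i * aSeqK p i n) + j * (c j i * aSeqK p i n)) := by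
    intro i hi
    obtain ⟨hi1, hij⟩ := mem_Icc.1 hi
    have hcoef := mul_neg_one_pow_mul_choose hi1 hij
    rw [aSeqK_succ i (by omega) (by positivity)]
    simp only [hc, add_tsub_cancel_right]
    field_simp
    linear_combination p * aSeqK p i n * hcoef
  have htop : (j : ℝ) * (c j (j + 1) * aSeqK p (j + 1) n) = 0 := by
    cases j with
    | zero => simp
    | succ j => simp [hc]
  have hsum_j : ∑ i ∈ Icc 1 (j + 1), (j : ℝ) * (c j i * aSeqK p i n)
      = j * ∑ i ∈ Icc 1 j, c j i * aSeqK p i n := by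
    rw [sum_Icc_succ_top (by omega), htop, add_zero, mul_sum]
  have hF : ∀ k m, factorialMomentFormula p k m = k ! * ∑ i ∈ Icc 1 k, c k i * aSeqK p i m :=
    fun _ _ => rfl
  rw [hF, hF, hF, sum_congr rfl hterm, sum_add_distrib, ← mul_sum, sum_add_distrib, ← mul_sum,
    hsum_j, factorial_succ]
  push_cast
  ring

lemma lazyH_succ {Ω : Type*} (X : ℕ → Ω → ℕ) (n : ℕ) (ω : Ω) :
    lazyH X (n + 1) ω = lazyH X n ω + X (n + 1) ω :=
  sum_Icc_succ_top (by omega) _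

lemma lazyH_one {Ω : Type*} (X : ℕ → Ω → ℕ) (ω : Ω) : lazyH X 1 ω = X 1 ω := by
  simp [lazyH]

lemma lazyH_le {Ω : Type*} {X : ℕ → Ω → ℕ} (hX : ∀ n ω, X n ω ≤ 1) (n : ℕ) (ω : Ω) :
    lazyH X n ω ≤ n :=
  (sum_le_sum fun i _ => hX i ω).trans (by simp)

lemma measurable_lazyH {Ω : Type*} {m : MeasurableSpace Ω} {X : ℕ → Ω → ℕ} {n : ℕ}
    (hX : ∀ i ≤ n, Measurable (X i)) : Measurable (lazyH X n) :=
  Finset.measurable_sum _ fun i hi => hX i (mem_Icc.1 hi).2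

lemma integrable_natCast_of_le {Ω : Type*} {m0 : MeasurableSpace Ω} {μ : Measure Ω}
    [IsFiniteMeasure μ] {f : Ω → ℕ} (hf : Measurable f) {C : ℕ} (hC : ∀ ω, f ω ≤ C) :
    Integrable (fun ω => (f ω : ℝ)) μ :=
  .of_bound (measurable_from_top.comp hf).aestronglyMeasurable C
    (.of_forall fun ω => by simpa using hC ω)

lemma integral_mul_eq_integral_mul_condExp {Ω : Type*} {m m0 : MeasurableSpace Ω}
    {μ : Measure Ω} (hm : m ≤ m0) [SigmaFinite (μ.trim hm)] {f g : Ω → ℝ}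
    (hf : StronglyMeasurable[m] f) (hfg : Integrable (f * g) μ) (hg : Integrable g μ) :
    ∫ ω, f ω * g ω ∂μ = ∫ ω, f ω * (μ[g | m]) ω ∂μ :=
  (integral_condExp hm).symm.trans
    (integral_congr_ae (condExp_mul_of_stronglyMeasurable_left hf hfg hg))

noncomputable def factorialMoment {Ω : Type*} {m0 : MeasurableSpace Ω} (μ : Measure Ω)
    (X : ℕ → Ω → ℕ) (k n : ℕ) : ℝ :=
  ∫ ω, ((lazyH X n ω).descFactorial k : ℝ) ∂μ

section FactorialMoment

variable {Ω : Type*} {m0 : MeasurableSpace Ω} {μ : Measure Ω} {ℱ : Filtration ℕ m0} {p : ℝ}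
  {X : ℕ → Ω → ℕ}

lemma factorialMoment_one [IsProbabilityMeasure μ] (hX1 : ∀ᵐ ω ∂μ, X 1 ω = 1) (k : ℕ) :
    factorialMoment μ X k 1 = ((1 : ℕ).descFactorial k : ℝ) := by
  rw [factorialMoment, integral_congr_ae (g := fun _ => ((1 : ℕ).descFactorial k : ℝ))
    (hX1.mono fun ω hω => by simp only [lazyH_one, hω]), integral_const, probReal_univ, one_smul]

lemma integrable_descFactorial_lazyH [IsFiniteMeasure μ] (hXval : ∀ n ω, X n ω ≤ 1) (hXm : ∀ n, Measurable (X n))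
    (n j : ℕ) : Integrable (fun ω => ((lazyH X n ω).descFactorial j : ℝ)) μ :=
  integrable_natCast_of_le
    ((Measurable.of_discrete (f := fun h : ℕ => h.descFactorial j)).comp
      (measurable_lazyH fun i _ => hXm i))
    fun ω => (descFactorial_le_pow _ j).trans (Nat.pow_le_pow_left (lazyH_le hXval n ω) j)

lemma integral_descFactorial_lazyH_mul [IsFiniteMeasure μ] (hXval : ∀ n ω, X n ω ≤ 1)
    (hadp : ∀ n, Measurable[ℱ n] (X n)) {n : ℕ}
    (hcond : μ[(fun ω => (X (n + 1) ω : ℝ)) | ℱ n] =ᵐ[μ] fun ω => p * (lazyH X n ω : ℝ) / n)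
    (j : ℕ) :
    ∫ ω, ((lazyH X n ω).descFactorial j : ℝ) * X (n + 1) ω ∂μ
      = p / n * (factorialMoment μ X (j + 1) n + j * factorialMoment μ X j n) := by
  have hXm : ∀ n, Measurable (X n) := fun n => (hadp n).mono (ℱ.le n) le_rfl
  have hHm : Measurable[ℱ n] (lazyH X n) :=
    measurable_lazyH fun i hi => (hadp i).mono (ℱ.mono hi) le_rfl
  have hfm : StronglyMeasurable[ℱ n] fun ω => ((lazyH X n ω).descFactorial j : ℝ) :=
    ((Measurable.of_discrete (f := fun h : ℕ => (h.descFactorial j : ℝ))).comp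
      hHm).stronglyMeasurable
  have hfg : Integrable (fun ω => ((lazyH X n ω).descFactorial j : ℝ) * X (n + 1) ω) μ := by
    simpa using integrable_natCast_of_le (μ := μ)
      (((Measurable.of_discrete (f := fun h : ℕ => h.descFactorial j)).comp
        (hHm.mono (ℱ.le n) le_rfl)).mul (hXm (n + 1)))
      fun ω => Nat.mul_le_mul ((descFactorial_le_pow _ j).trans
        (Nat.pow_le_pow_left (lazyH_le hXval n ω) j)) (hXval (n + 1) ω)
  rw [integral_mul_eq_integral_mul_condExp (ℱ.le n) hfm hfg
      (integrable_natCast_of_le (hXm (n + 1)) (hXval (n + 1))),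
    integral_congr_ae (hcond.mono fun ω hω => by rw [hω]), factorialMoment,
    factorialMoment, ← integral_const_mul,
    ← integral_add (integrable_descFactorial_lazyH hXval hXm n (j + 1))
      ((integrable_descFactorial_lazyH hXval hXm n j).const_mul _), ← integral_const_mul]
  congr 1
  ext ω
  rw [show ((lazyH X n ω).descFactorial j : ℝ) * (p * (lazyH X n ω : ℝ) / n)
    = p / n * (((lazyH X n ω).descFactorial j * lazyH X n ω : ℕ) : ℝ) by push_cast; ring,
    descFactorial_mul_self]
  push_cast
  ring

lemma satisfiesMomentRecurrence_factorialMoment [IsFiniteMeasure μ] (hXval : ∀ n ω, X n ω ≤ 1)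
    (hadp : ∀ n, Measurable[ℱ n] (X n))
    (hcond : ∀ n : ℕ, 1 ≤ n →
      μ[(fun ω => (X (n + 1) ω : ℝ)) | ℱ n] =ᵐ[μ] fun ω => p * (lazyH X n ω : ℝ) / n) :
    SatisfiesMomentRecurrence p (factorialMoment μ X) := by
  intro n hn j
  have hXm : ∀ n, Measurable (X n) := fun n => (hadp n).mono (ℱ.le n) le_rfl
  have hdiff : factorialMoment μ X (j + 1) (n + 1) - factorialMoment μ X (j + 1) n
      = (j + 1) * ∫ ω, ((lazyH X n ω).descFactorial j : ℝ) * X (n + 1) ω ∂μ := by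
    rw [factorialMoment, factorialMoment, ← integral_sub
      (integrable_descFactorial_lazyH hXval hXm _ _) (integrable_descFactorial_lazyH hXval hXm _ _),
      ← integral_const_mul]
    congr 1
    ext ω
    rw [lazyH_succ, descFactorial_add_of_le_one (hXval (n + 1) ω)]
    push_cast
    ring
  rw [integral_descFactorial_lazyH_mul hXval hadp (hcond n hn) j] at hdiff
  linear_combination hdiff

end FactorialMoment

theorem stmt4_general {Ω : Type*} {m0 : MeasurableSpace Ω} (μ : Measure Ω) [IsProbabilityMeasure μ]
    (ℱ : Filtration ℕ m0) (p : ℝ) (hp : 0 < p)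
    (X : ℕ → Ω → ℕ)
    (hXval : ∀ n ω, X n ω ≤ 1)
    (hX1 : ∀ᵐ ω ∂μ, X 1 ω = 1)
    (hadp : ∀ n, Measurable[ℱ n] (X n))
    (hcond : ∀ n : ℕ, 1 ≤ n →
      μ[(fun ω => (X (n + 1) ω : ℝ)) | ℱ n] =ᵐ[μ]
        fun ω => p * (lazyH X n ω : ℝ) / n) :
    ∀ k : ℕ, 1 ≤ k → ∀ n : ℕ, 1 ≤ n →
      ∫ ω, ((lazyH X n ω).descFactorial k : ℝ) ∂μ =
        (k.factorial : ℝ) *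
          ∑ i ∈ Finset.Icc 1 k, (-1 : ℝ) ^ (k - i) * ((k - 1).choose (i - 1) : ℝ) * aSeqK p i n := by
  intro k hk n hn
  obtain ⟨j, rfl⟩ := exists_eq_add_one_of_ne_zero (one_le_iff_ne_zero.1 hk)
  exact (satisfiesMomentRecurrence_factorialMoment hXval hadp hcond).eq
    (satisfiesMomentRecurrence_factorialMomentFormula hp.le)
    (fun j => by rw [factorialMoment_one hX1, factorialMomentFormula_one hp.le]) hn j

theorem stmt4 {Ω : Type*} {m0 : MeasurableSpace Ω} (μ : Measure Ω) [IsProbabilityMeasure μ]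
    (ℱ : Filtration ℕ m0) (p : ℝ) (hp : 0 < p) (hp1 : p < 1)
    (X : ℕ → Ω → ℕ)
    (hXval : ∀ n ω, X n ω ≤ 1)
    (hX1 : ∀ᵐ ω ∂μ, X 1 ω = 1)
    (hadp : ∀ n, Measurable[ℱ n] (X n))
    (hcond : ∀ n : ℕ, 1 ≤ n →
      μ[(fun ω => (X (n + 1) ω : ℝ)) | ℱ n] =ᵐ[μ]
        fun ω => p * (lazyH X n ω : ℝ) / n) :
    ∀ k : ℕ, 1 ≤ k → ∀ n : ℕ, 1 ≤ n →
      ∫ ω, ((lazyH X n ω).descFactorial k : ℝ) ∂μ =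
        (k.factorial : ℝ) *
          ∑ i ∈ Finset.Icc 1 k, (-1 : ℝ) ^ (k - i) * ((k - 1).choose (i - 1) : ℝ) * aSeqK p i n :=
  stmt4_general μ ℱ p hp X hXval hX1 hadp hcond
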